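/- arXiv:1706.06754 — 3 statements merged into one kernel-verified Lean document; each statement's English description precedes it below -/
import Mathlib

section
/- Let U and V be real Hilbert spaces, b : U × V → ℝ a bounded bilinear form with associated operator B : U → V' defined by ⟨Bu, v⟩ = b(u,v), and R_V : V → V' the Riesz isomorphism. If U_h ⊆ U is a finite-dimensional subspace and u_h ∈ U_h minimizes the residual ‖B(δu) − ℓ‖_{V'} over δu ∈ U_h for a given ℓ ∈ V', then u_h satisfies b(u_h, v) = ℓ(v) for all v in the 'optimal test space' V_opt = R_V⁻¹ B U_h. -/
/-!
The Riesz map is an isometry, so minimizing the residual `‖B δu - ℓ‖_{V'}` over `U_h` is a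
least-squares problem in `V`. Perturbing the minimizer `u_h` along `-t • w` with `w ∈ U_h`
gives the first-order condition that the residual `B u_h - ℓ` vanishes on `R_V⁻¹ B w`.
-/

open scoped RealInnerProductSpace

open InnerProductSpace

theorem real_inner_eq_zero_of_forall_norm_le_norm_sub_smul {F : Type*} [NormedAddCommGroup F]
    [InnerProductSpace ℝ F] {x y : F} (h : ∀ t : ℝ, ‖x‖ ≤ ‖x - t • y‖) : ⟪x, y⟫ = 0 := by
  have hquad : ∀ t : ℝ, 0 ≤ ‖y‖ ^ 2 * (t * t) + (-2 * ⟪x, y⟫) * t + 0 := by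
    intro t
    have hsq := pow_le_pow_left₀ (norm_nonneg x) (h t) 2
    rw [norm_sub_sq_real, real_inner_smul_right, norm_smul, Real.norm_eq_abs, mul_pow,
      sq_abs] at hsq
    linarith
  have hdiscrim := discrim_le_zero hquad
  rw [discrim] at hdiscrim
  nlinarith [sq_nonneg ⟪x, y⟫]

theorem StrongDual.apply_toDual_symm_eq_zero_of_forall_norm_le_norm_sub_smul {V : Type*}
    [NormedAddCommGroup V] [InnerProductSpace ℝ V] [CompleteSpace V] {r g : StrongDual ℝ V}
    (h : ∀ t : ℝ, ‖r‖ ≤ ‖r - t • g‖) : r ((toDual ℝ V).symm g) = 0 := by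
  rw [← toDual_symm_apply]
  refine real_inner_eq_zero_of_forall_norm_le_norm_sub_smul fun t => ?_
  have hsymm : (toDual ℝ V).symm r - t • (toDual ℝ V).symm g =
      (toDual ℝ V).symm (r - t • g) := by
    simp [map_sub]
  rw [hsymm, LinearIsometryEquiv.norm_map, LinearIsometryEquiv.norm_map]
  exact h t

theorem stmt0_general {U V : Type*}
    [NormedAddCommGroup U] [InnerProductSpace ℝ U]
    [NormedAddCommGroup V] [InnerProductSpace ℝ V] [CompleteSpace V]
    (b : U →L[ℝ] V →L[ℝ] ℝ) (U_h : Submodule ℝ U)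
    (ℓ : V →L[ℝ] ℝ) (u_h : U) (hu_h : u_h ∈ U_h)
    (hmin : ∀ δu ∈ U_h, ‖b u_h - ℓ‖ ≤ ‖b δu - ℓ‖) :
    ∀ w ∈ U_h, b u_h ((InnerProductSpace.toDual ℝ V).symm (b w)) =
      ℓ ((InnerProductSpace.toDual ℝ V).symm (b w)) := by
  intro w hw
  have hperturb (t : ℝ) : ‖b u_h - ℓ‖ ≤ ‖b u_h - ℓ - t • b w‖ := by
    simpa [map_sub, map_smul, sub_right_comm] using
      hmin (u_h - t • w) (U_h.sub_mem hu_h (U_h.smul_mem t hw))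
  exact sub_eq_zero.mp
    (StrongDual.apply_toDual_symm_eq_zero_of_forall_norm_le_norm_sub_smul hperturb)

/-- The minimum-residual solution satisfies the variational equation tested
against the optimal test space `V_opt = R_V⁻¹ B U_h`. -/
theorem stmt0 {U V : Type*}
    [NormedAddCommGroup U] [InnerProductSpace ℝ U] [CompleteSpace U]
    [NormedAddCommGroup V] [InnerProductSpace ℝ V] [CompleteSpace V]
    (b : U →L[ℝ] V →L[ℝ] ℝ) (U_h : Submodule ℝ U) [FiniteDimensional ℝ U_h]
    (ℓ : V →L[ℝ] ℝ) (u_h : U) (hu_h : u_h ∈ U_h)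
    (hmin : ∀ δu ∈ U_h, ‖b u_h - ℓ‖ ≤ ‖b δu - ℓ‖) :
    ∀ w ∈ U_h, b u_h ((InnerProductSpace.toDual ℝ V).symm (b w)) =
      ℓ ((InnerProductSpace.toDual ℝ V).symm (b w)) :=
  stmt0_general b U_h ℓ u_h hu_h hmin
end

section
/- For every p ∈ ℕ with p ≥ 1, the sequence P^p → RT^p → P^{p−1} with maps curl(u) = (∂u/∂x₂, −∂u/∂x₁) and div is exact at RT^p: the kernel of div restricted to RT^p equals the image of curl on P^p. -/
/-!
Write `τ = a + x·g` with `a ∈ (P^{p-1})²`. The coefficient of `x^m` in `div (x·g)` is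
`(|m| + 2)·g_m`, while that of `div a` vanishes for `|m| ≥ p - 1`; so `div τ = 0` kills every
coefficient of `g` of degree `≥ p - 1`, and `τ` already lies in `(P^{p-1})²`. A divergence-free
polynomial field of degree `≤ d` in the plane is a curl of degree `≤ d + 1`: with `u₀` an
antiderivative of `τ₁` in `y`, the polynomial `∂ₓu₀ + τ₂` has no `y`-dependence, and subtracting
its antiderivative in `x` from `u₀` gives the potential.
-/

open MvPolynomial

/-- Membership in the 2D Raviart–Thomas space `RT^p = (P^{p-1})² + x·P^{p-1}`,
expressed componentwise. -/
def MemRT (p : ℕ) (τ₁ τ₂ : MvPolynomial (Fin 2) ℝ) : Prop :=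
  ∃ a₁ a₂ g : MvPolynomial (Fin 2) ℝ,
    a₁.totalDegree ≤ p - 1 ∧ a₂.totalDegree ≤ p - 1 ∧ g.totalDegree ≤ p - 1 ∧
    τ₁ = a₁ + X 0 * g ∧ τ₂ = a₂ + X 1 * g

namespace MvPolynomial

section CommSemiring

variable {σ R : Type*} [CommSemiring R]

theorem totalDegree_le_of_coeff_eq_zero {f : MvPolynomial σ R} {d : ℕ}
    (h : ∀ m : σ →₀ ℕ, d < m.degree → coeff m f = 0) : f.totalDegree ≤ d :=
  Finset.sup_le fun m hm => not_lt.mp fun hlt => mem_support_iff.mp hm (h m hlt)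

theorem coeff_pderiv_eq_zero_of_totalDegree_le {f : MvPolynomial σ R} {d : ℕ}
    (hf : f.totalDegree ≤ d) (i : σ) {m : σ →₀ ℕ} (hm : d ≤ m.degree) :
    coeff m (pderiv i f) = 0 := by
  rw [coeff_pderiv, coeff_eq_zero_of_totalDegree_lt, zero_mul]
  rw [← Finsupp.degree_apply, map_add, Finsupp.degree_single]
  omega

theorem totalDegree_pderiv_le (i : σ) (f : MvPolynomial σ R) :
    (pderiv i f).totalDegree ≤ f.totalDegree - 1 :=
  totalDegree_le_of_coeff_eq_zero fun _ hm =>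
    coeff_pderiv_eq_zero_of_totalDegree_le le_rfl i (by omega)

theorem totalDegree_X_mul_le_of_coeff_eq_zero {g : MvPolynomial σ R} {d : ℕ}
    (hg : ∀ m : σ →₀ ℕ, d ≤ m.degree → coeff m g = 0) (i : σ) :
    (X i * g).totalDegree ≤ d := by
  classical
  refine totalDegree_le_of_coeff_eq_zero fun n hn => ?_
  rw [coeff_X_mul']
  split_ifs with hi
  · apply hg
    have hle : Finsupp.single i 1 ≤ n :=
      Finsupp.single_le_iff.mpr (Nat.one_le_iff_ne_zero.mpr (Finsupp.mem_support_iff.mp hi))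
    have hdeg := congrArg Finsupp.degree (tsub_add_cancel_of_le hle)
    rw [map_add, Finsupp.degree_single] at hdeg
    omega
  · rfl

theorem pderiv_pderiv_comm (i j : σ) (f : MvPolynomial σ R) :
    pderiv i (pderiv j f) = pderiv j (pderiv i f) := by
  obtain rfl | hij := eq_or_ne i j
  · rfl
  ext m
  rw [coeff_pderiv, coeff_pderiv, coeff_pderiv, coeff_pderiv, add_right_comm m,
    Finsupp.add_apply, Finsupp.add_apply, Finsupp.single_eq_of_ne hij,
    Finsupp.single_eq_of_ne hij.symm, add_zero, add_zero]
  ring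

theorem coeff_pderiv_X_mul (i : σ) (g : MvPolynomial σ R) (m : σ →₀ ℕ) :
    coeff m (pderiv i (X i * g)) = coeff m g * (m i + 1) := by
  rw [coeff_pderiv, add_comm, coeff_X_mul]

end CommSemiring

section Antiderivative

variable {σ K : Type*} [Field K]

noncomputable def antideriv (i : σ) : MvPolynomial σ K →ₗ[K] MvPolynomial σ K :=
  (basisMonomials σ K).constr K fun m => monomial (m + Finsupp.single i 1) (m i + 1 : K)⁻¹

theorem antideriv_monomial (i : σ) (m : σ →₀ ℕ) (a : K) :
    antideriv i (monomial m a) = monomial (m + Finsupp.single i 1) (a / (m i + 1)) := by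
  have hm : monomial m a = a • basisMonomials σ K m := by
    rw [coe_basisMonomials, smul_monomial, smul_eq_mul, mul_one]
  rw [hm, map_smul, antideriv, Module.Basis.constr_basis, smul_monomial, smul_eq_mul,
    div_eq_mul_inv]

theorem pderiv_antideriv [CharZero K] (i : σ) (f : MvPolynomial σ K) :
    pderiv i (antideriv i f) = f := by
  classical
  induction f using MvPolynomial.induction_on' with
  | add f g hf hg => rw [map_add, map_add, hf, hg]
  | monomial m a =>
    rw [antideriv_monomial, pderiv_monomial, add_tsub_cancel_right, Finsupp.add_apply,
      Finsupp.single_eq_same]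
    push_cast
    rw [div_mul_cancel₀ _ (Nat.cast_add_one_ne_zero _)]

theorem pderiv_antideriv_of_ne {i j : σ} (hij : i ≠ j) (f : MvPolynomial σ K) :
    pderiv j (antideriv i f) = antideriv i (pderiv j f) := by
  classical
  induction f using MvPolynomial.induction_on' with
  | add f g hf hg => simp only [map_add, hf, hg]
  | monomial m a =>
    have hji : (Finsupp.single j 1 : σ →₀ ℕ) i = 0 := Finsupp.single_eq_of_ne hij
    have hexp : m + Finsupp.single i 1 - Finsupp.single j 1 =
        m - Finsupp.single j 1 + Finsupp.single i 1 := by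
      ext k
      obtain rfl | hki := eq_or_ne k i
      · simp [Finsupp.single_eq_of_ne hij]
      · simp [Finsupp.single_eq_of_ne hki]
    rw [antideriv_monomial, pderiv_monomial, pderiv_monomial, antideriv_monomial, hexp,
      Finsupp.add_apply, Finsupp.single_eq_of_ne hij.symm, Finsupp.tsub_apply, hji, tsub_zero,
      add_zero, div_mul_eq_mul_div]

theorem totalDegree_antideriv_le (i : σ) (f : MvPolynomial σ K) :
    (antideriv i f).totalDegree ≤ f.totalDegree + 1 := by
  conv_lhs => rw [f.as_sum, map_sum]
  refine totalDegree_finsetSum_le fun m hm => ?_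
  rw [antideriv_monomial]
  refine (totalDegree_monomial_le _ _).trans ?_
  change Finsupp.degree (m + Finsupp.single i 1) ≤ _
  rw [map_add, Finsupp.degree_single]
  exact Nat.add_le_add_right (le_totalDegree hm) 1

end Antiderivative

end MvPolynomial

section Plane

variable {K : Type*} [Field K] [CharZero K]

theorem exists_curl_eq_of_pderiv_add_pderiv_eq_zero {τ₁ τ₂ : MvPolynomial (Fin 2) K} {d : ℕ}
    (h₁ : τ₁.totalDegree ≤ d) (h₂ : τ₂.totalDegree ≤ d)
    (hdiv : pderiv 0 τ₁ + pderiv 1 τ₂ = 0) :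
    ∃ u : MvPolynomial (Fin 2) K, u.totalDegree ≤ d + 1 ∧
      τ₁ = pderiv 1 u ∧ τ₂ = -pderiv 0 u := by
  set u₀ := antideriv 1 τ₁
  have hu₀ : pderiv 1 u₀ = τ₁ := pderiv_antideriv 1 τ₁
  have hdeg_u₀ : u₀.totalDegree ≤ d + 1 := (totalDegree_antideriv_le 1 τ₁).trans (by omega)
  set h := pderiv 0 u₀ + τ₂
  have hh : pderiv 1 h = 0 := by rw [map_add, pderiv_pderiv_comm, hu₀, hdiv]
  have hdeg_h : h.totalDegree ≤ d :=
    (totalDegree_add _ _).trans (max_le ((totalDegree_pderiv_le 0 u₀).trans (by omega)) h₂)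
  refine ⟨u₀ - antideriv 0 h, ?_, ?_, ?_⟩
  · exact (totalDegree_sub _ _).trans
      (max_le hdeg_u₀ ((totalDegree_antideriv_le 0 h).trans (by omega)))
  · rw [map_sub, hu₀, pderiv_antideriv_of_ne zero_ne_one, hh, map_zero, sub_zero]
  · rw [map_sub, pderiv_antideriv]
    ring

theorem totalDegree_X_mul_le_of_pderiv_add_pderiv_eq_zero {a₁ a₂ g : MvPolynomial (Fin 2) K}
    {d : ℕ} (ha₁ : a₁.totalDegree ≤ d) (ha₂ : a₂.totalDegree ≤ d)
    (hdiv : pderiv 0 (a₁ + X 0 * g) + pderiv 1 (a₂ + X 1 * g) = 0) (i : Fin 2) :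
    (X i * g).totalDegree ≤ d := by
  refine totalDegree_X_mul_le_of_coeff_eq_zero (fun m hm => ?_) i
  have hcoeff := congrArg (coeff m) hdiv
  rw [map_add, map_add, coeff_zero, coeff_add, coeff_add, coeff_add,
    coeff_pderiv_eq_zero_of_totalDegree_le ha₁ 0 hm,
    coeff_pderiv_eq_zero_of_totalDegree_le ha₂ 1 hm, coeff_pderiv_X_mul, coeff_pderiv_X_mul,
    zero_add, zero_add, ← mul_add] at hcoeff
  have hfactor : (m 0 + 1 + (m 1 + 1 : K)) ≠ 0 := by
    exact_mod_cast Nat.succ_ne_zero (m 0 + 1 + m 1)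
  exact (mul_eq_zero.mp hcoeff).resolve_right hfactor

end Plane

/-- Exactness of `P^p → RT^p → P^{p-1}` at `RT^p`: for `τ ∈ RT^p`,
`div τ = 0` iff `τ = curl u = (∂₂u, −∂₁u)` for some `u ∈ P^p`. -/
theorem stmt8 (p : ℕ) (hp : 1 ≤ p) (τ₁ τ₂ : MvPolynomial (Fin 2) ℝ)
    (hτ : MemRT p τ₁ τ₂) :
    pderiv (0 : Fin 2) τ₁ + pderiv (1 : Fin 2) τ₂ = 0 ↔
      ∃ u : MvPolynomial (Fin 2) ℝ, u.totalDegree ≤ p ∧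
        τ₁ = pderiv (1 : Fin 2) u ∧ τ₂ = -pderiv (0 : Fin 2) u := by
  constructor
  · intro hdiv
    obtain ⟨a₁, a₂, g, ha₁, ha₂, -, rfl, rfl⟩ := hτ
    have hX := totalDegree_X_mul_le_of_pderiv_add_pderiv_eq_zero ha₁ ha₂ hdiv
    obtain ⟨u, hu, hcurl⟩ := exists_curl_eq_of_pderiv_add_pderiv_eq_zero
      ((totalDegree_add _ _).trans (max_le ha₁ (hX 0)))
      ((totalDegree_add _ _).trans (max_le ha₂ (hX 1))) hdiv
    exact ⟨u, by omega, hcurl⟩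
  · rintro ⟨u, -, rfl, rfl⟩
    rw [map_neg, pderiv_pderiv_comm, add_neg_cancel]
end

section
/- The space RT^p is invariant under affine maps of the special form x ↦ A x + b where A is a scalar multiple of a rotation: if τ ∈ RT^p and φ(x) = cQx + b with Q orthogonal and c ≠ 0, then the Piola-type pullback x ↦ Q^T τ(φ(x)) belongs to RT^p. -/
open MvPolynomial

lemma aeval_totalDegree_le (φ : Fin 2 → MvPolynomial (Fin 2) ℝ)
    (hφ : ∀ i, (φ i).totalDegree ≤ 1) (f : MvPolynomial (Fin 2) ℝ) :
    (aeval φ f).totalDegree ≤ f.totalDegree := by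
  conv_lhs => rw [f.as_sum]
  rw [map_sum]
  refine totalDegree_finsetSum_le fun m hm => ?_
  rw [aeval_monomial]
  refine (totalDegree_mul _ _).trans ?_
  rw [algebraMap_eq, totalDegree_C, zero_add]
  calc (m.prod fun i k => φ i ^ k).totalDegree
      ≤ ∑ i ∈ m.support, (φ i ^ m i).totalDegree := totalDegree_finset_prod _ _
    _ ≤ ∑ i ∈ m.support, m i := by
        refine Finset.sum_le_sum fun i _ => ?_
        calc (φ i ^ m i).totalDegree ≤ m i * (φ i).totalDegree := totalDegree_pow _ _
          _ ≤ m i * 1 := Nat.mul_le_mul_left _ (hφ i)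
          _ = m i := Nat.mul_one _
    _ = m.sum fun _ e => e := rfl
    _ ≤ f.totalDegree := le_totalDegree hm

/-- `RT^p` is invariant under the pullback `x ↦ Qᵀ τ(φ(x))` along affine maps
`φ(x) = c Q x + b` with `Q` orthogonal and `c ≠ 0`. -/
theorem stmt10 (p : ℕ) (hp : 1 ≤ p) (τ₁ τ₂ : MvPolynomial (Fin 2) ℝ)
    (hτ : MemRT p τ₁ τ₂)
    (Q : Matrix (Fin 2) (Fin 2) ℝ) (hQ : Q.transpose * Q = 1)
    (c : ℝ) (hc : c ≠ 0) (b : Fin 2 → ℝ)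
    (φ : Fin 2 → MvPolynomial (Fin 2) ℝ)
    (hφ : ∀ i, φ i = C c * (C (Q i 0) * X 0 + C (Q i 1) * X 1) + C (b i))
    (σ : Fin 2 → MvPolynomial (Fin 2) ℝ)
    (hσ : ∀ k, σ k = C (Q 0 k) * aeval φ τ₁ + C (Q 1 k) * aeval φ τ₂) :
    MemRT p (σ 0) (σ 1) := by
  obtain ⟨a₁, a₂, g, hd1, hd2, hdg, ht1, ht2⟩ := hτ
  have hdeg : ∀ i, (φ i).totalDegree ≤ 1 := by
    intro i
    rw [hφ i]
    refine (totalDegree_add _ _).trans (max_le ?_ (by simp)) 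
    refine (totalDegree_mul _ _).trans ?_
    rw [totalDegree_C, zero_add]
    refine (totalDegree_add _ _).trans (max_le ?_ ?_) <;>
      exact (totalDegree_mul _ _).trans (by simp)
  have horth : ∀ k l, Q 0 k * Q 0 l + Q 1 k * Q 1 l = if k = l then 1 else 0 := by
    intro k l
    have := congrFun (congrFun hQ k) l
    simpa [Matrix.mul_apply, Matrix.one_apply, Fin.sum_univ_two, Matrix.transpose_apply] using this
  have hC : ∀ k l, (C (Q 0 k) * C (Q 0 l) + C (Q 1 k) * C (Q 1 l) : MvPolynomial (Fin 2) ℝ)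
      = C (if k = l then 1 else 0) := by
    intro k l; rw [← C_mul, ← C_mul, ← C_add, horth]
  have h00 := hC 0 0; have h01 := hC 0 1; have h11 := hC 1 1
  simp only [if_true, if_pos rfl, if_neg (by decide : (0 : Fin 2) ≠ 1), C_1, C_0] at h00 h01 h11
  have hsum : ∀ k : Fin 2, (C (Q 0 k) * aeval φ a₁ + C (Q 1 k) * aeval φ a₂
      + (C (Q 0 k) * C (b 0) + C (Q 1 k) * C (b 1)) * aeval φ g).totalDegree ≤ p - 1 := by
    intro k
    refine (totalDegree_add _ _).trans (max_le ((totalDegree_add _ _).trans (max_le ?_ ?_)) ?_)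
    · exact (totalDegree_mul _ _).trans (by
        rw [totalDegree_C, zero_add]; exact (aeval_totalDegree_le φ hdeg a₁).trans hd1)
    · exact (totalDegree_mul _ _).trans (by
        rw [totalDegree_C, zero_add]; exact (aeval_totalDegree_le φ hdeg a₂).trans hd2)
    · refine (totalDegree_mul _ _).trans ?_
      rw [← C_mul, ← C_mul, ← C_add, totalDegree_C, zero_add]
      exact (aeval_totalDegree_le φ hdeg g).trans hdg
  refine ⟨C (Q 0 0) * aeval φ a₁ + C (Q 1 0) * aeval φ a₂
      + (C (Q 0 0) * C (b 0) + C (Q 1 0) * C (b 1)) * aeval φ g,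
    C (Q 0 1) * aeval φ a₁ + C (Q 1 1) * aeval φ a₂
      + (C (Q 0 1) * C (b 0) + C (Q 1 1) * C (b 1)) * aeval φ g,
    C c * aeval φ g, hsum 0, hsum 1, ?_, ?_, ?_⟩
  · refine (totalDegree_mul _ _).trans ?_
    rw [totalDegree_C, zero_add]
    exact (aeval_totalDegree_le φ hdeg g).trans hdg
  · rw [hσ 0, ht1, ht2, map_add, map_add, map_mul, map_mul, aeval_X, aeval_X, hφ 0, hφ 1]
    linear_combination (C c * X 0 * aeval φ g) * h00 + (C c * X 1 * aeval φ g) * h01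
  · rw [hσ 1, ht1, ht2, map_add, map_add, map_mul, map_mul, aeval_X, aeval_X, hφ 0, hφ 1]
    linear_combination (C c * X 0 * aeval φ g) * h01 + (C c * X 1 * aeval φ g) * h11
end
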